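/- arXiv:math/0702691 — 5 statements merged into one kernel-verified Lean document; each statement's English description precedes it below -/
import Mathlib

section
/- Let M = M⁰(S; I, J; P) be a Rees matrix semigroup with zero over a semigroup S, and fix i ∈ I, j ∈ J with P(j,i) ≠ 0. Suppose that for every j' ∈ J, either P(j',i) = 0 or S·P(j',i) ⊆ S·P(j,i). Then T = {(i, s, j) : s ∈ S} is a pseudo-right-unitary subsemigroup of M. -/
/-- Multiplication of the Rees matrix semigroup with zero `M⁰(S; I, J; P)`,
with carrier `Option (I × S × J)` where `none` is the zero element. -/
def reesMul0 {S I J : Type*} [Semigroup S] (P : J → I → Option S) :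
    Option (I × S × J) → Option (I × S × J) → Option (I × S × J)
  | some a, some b => (P a.2.2 b.1).map (fun p => (a.1, a.2.1 * p * b.2.1, b.2.2))
  | _, _ => none

/-- Let `M = M⁰(S; I, J; P)` and fix `i, j` with `P j i = some p ≠ 0`. If for
every `j'` either `P j' i = 0` or `S·(P j' i) ⊆ S·(P j i)`, then
`T = {(i, s, j) : s ∈ S}` is a pseudo-right-unitary subsemigroup of `M`. -/
theorem rees_zero_pseudoRightUnitary {S I J : Type*} [Semigroup S]
    (P : J → I → Option S) (i : I) (j : J) (p : S) (hp : P j i = some p)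
    (hsub : ∀ (j' : J) (p' : S), P j' i = some p' →
      ∀ s : S, ∃ s' : S, s * p' = s' * p) :
    (∀ a ∈ {a : Option (I × S × J) | ∃ s : S, a = some (i, s, j)},
      ∀ b ∈ {a : Option (I × S × J) | ∃ s : S, a = some (i, s, j)},
        reesMul0 P a b ∈ {a : Option (I × S × J) | ∃ s : S, a = some (i, s, j)}) ∧
    (∀ a : Option (I × S × J),
      ∃ b ∈ {a : Option (I × S × J) | ∃ s : S, a = some (i, s, j)},
        ∀ x ∈ {a : Option (I × S × J) | ∃ s : S, a = some (i, s, j)},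
          reesMul0 P a x ∈ {a : Option (I × S × J) | ∃ s : S, a = some (i, s, j)} →
            reesMul0 P a x = reesMul0 P b x) := by
  constructor
  · rintro _ ⟨s, rfl⟩ _ ⟨t, rfl⟩
    exact ⟨s * p * t, by simp [reesMul0, hp]⟩
  · intro a
    match a with
    | none =>
      refine ⟨some (i, p, j), ⟨p, rfl⟩, ?_⟩
      rintro _ ⟨s, rfl⟩ ⟨t, ht⟩
      simp [reesMul0] at ht
    | some (i₁, g, j₁) =>
      rcases hq : P j₁ i with _ | q
      · refine ⟨some (i, p, j), ⟨p, rfl⟩, ?_⟩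
        rintro _ ⟨s, rfl⟩ ⟨t, ht⟩
        simp [reesMul0, hq] at ht
      · by_cases hi : i₁ = i
        · subst hi
          obtain ⟨g', hg'⟩ := hsub j₁ q hq g
          refine ⟨some (i₁, g', j), ⟨g', rfl⟩, ?_⟩
          rintro _ ⟨s, rfl⟩ _
          simp only [reesMul0, hq, hp, Option.map_some]
          congr 2
          rw [hg']
        · refine ⟨some (i, p, j), ⟨p, rfl⟩, ?_⟩
          rintro _ ⟨s, rfl⟩ ⟨t, ht⟩
          simp [reesMul0, hq] at ht
          exact absurd ht.1 hi
end

section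
/- Let M = M(S; I, J; P) be a Rees matrix semigroup without zero over a semigroup S, and fix i ∈ I, j ∈ J such that for every j' ∈ J, S·P(j',i) ⊆ S·P(j,i). Then T = {(i, s, j) : s ∈ S} is a pseudo-right-unitary subsemigroup of M. -/
/-- Multiplication of the Rees matrix semigroup without zero `M(S; I, J; P)`
on the carrier `I × S × J`. -/
def reesMul {S I J : Type*} [Semigroup S] (P : J → I → S)
    (a b : I × S × J) : I × S × J :=
  (a.1, a.2.1 * P a.2.2 b.1 * b.2.1, b.2.2)

/-- Let `M = M(S; I, J; P)` and fix `i, j` such that `S·(P j' i) ⊆ S·(P j i)`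
for every `j'`. Then `T = {(i, s, j) : s ∈ S}` is a pseudo-right-unitary
subsemigroup of `M`. -/
theorem rees_pseudoRightUnitary {S I J : Type*} [Semigroup S]
    (P : J → I → S) (i : I) (j : J)
    (hsub : ∀ (j' : J) (s : S), ∃ s' : S, s * P j' i = s' * P j i) :
    (∀ a ∈ {a : I × S × J | ∃ s : S, a = (i, s, j)},
      ∀ b ∈ {a : I × S × J | ∃ s : S, a = (i, s, j)},
        reesMul P a b ∈ {a : I × S × J | ∃ s : S, a = (i, s, j)}) ∧
    (∀ a : I × S × J,
      ∃ b ∈ {a : I × S × J | ∃ s : S, a = (i, s, j)},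
        ∀ x ∈ {a : I × S × J | ∃ s : S, a = (i, s, j)},
          reesMul P a x ∈ {a : I × S × J | ∃ s : S, a = (i, s, j)} →
            reesMul P a x = reesMul P b x) := by
  constructor
  · rintro a ⟨s, rfl⟩ b ⟨t, rfl⟩
    exact ⟨s * P j i * t, rfl⟩
  · rintro ⟨i₁, s, j₁⟩
    obtain ⟨s', hs'⟩ := hsub j₁ s
    refine ⟨(i, s', j), ⟨s', rfl⟩, ?_⟩
    rintro x ⟨t, rfl⟩ ⟨u, hu⟩
    simp only [reesMul] at hu ⊢
    obtain ⟨hi, -⟩ := Prod.mk.injEq .. ▸ hu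
    subst hi
    rw [mul_assoc, mul_assoc, ← mul_assoc s, hs', mul_assoc]
end

section
/- Zig Zag Lemma: For a monoid M with generators σ : X* → M, a word w = u₀ v̄₁ u₁ v̄₂ ⋯ u_{n-1} v̄ₙ (with uᵢ, vᵢ ∈ X*) lies in the loop problem L_σ(M) if and only if there exist p₀, …, pₙ ∈ M with p₀ = pₙ = 1 and pᵢ·σ(uᵢ) = p_{i+1}·σ(v_{i+1}) for all 0 ≤ i < n. -/
/-- The formal inverse of a letter of the doubled alphabet `X ⊕ X`
(`Sum.inl x` is the generator `x`, `Sum.inr x` its formal inverse `x̄`). -/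
def linv {X : Type*} : X ⊕ X → X ⊕ X := Sum.elim Sum.inr Sum.inl

/-- The formal inverse `w̄` of a word over the doubled alphabet. -/
def wbar {X : Type*} (w : List (X ⊕ X)) : List (X ⊕ X) :=
  (w.map linv).reverse

/-- One edge of the loop automaton of a monoid `M` with respect to generators
`σ : X → M`: a positive edge `p →ˣ p·σ(x)` or its reverse labelled `x̄`. -/
def mstep {M X : Type*} [Monoid M] (σ : X → M) (p : M) : X ⊕ X → M → Prop
  | Sum.inl x, q => p * σ x = q
  | Sum.inr x, q => q * σ x = p

/-- `mpath σ p w q` holds iff `w` labels a path from `p` to `q` in the loop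
automaton of `M` with respect to `σ`. -/
def mpath {M X : Type*} [Monoid M] (σ : X → M) : M → List (X ⊕ X) → M → Prop
  | p, [], q => p = q
  | p, a :: w, q => ∃ r : M, mstep σ p a r ∧ mpath σ r w q

/-- The positive word `u` viewed over the doubled alphabet. -/
def posw {X : Type*} (u : List X) : List (X ⊕ X) := u.map Sum.inl

/-- The formal inverse `v̄` of a positive word `v`. -/
def negw {X : Type*} (v : List X) : List (X ⊕ X) := (v.map Sum.inr).reverse

lemma mpath_append {M X : Type*} [Monoid M] (σ : X → M) (w1 w2 : List (X ⊕ X)) :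
    ∀ p q : M, mpath σ p (w1 ++ w2) q ↔ ∃ r : M, mpath σ p w1 r ∧ mpath σ r w2 q := by
  induction w1 with
  | nil => intro p q; simp [mpath]
  | cons a w ih =>
    intro p q
    constructor
    · rintro ⟨r, hr, h⟩
      obtain ⟨s, h1, h2⟩ := (ih r q).1 h
      exact ⟨s, ⟨r, hr, h1⟩, h2⟩
    · rintro ⟨s, ⟨r, hr, h1⟩, h2⟩
      exact ⟨r, hr, (ih r q).2 ⟨s, h1, h2⟩⟩

lemma mpath_posw {M X : Type*} [Monoid M] (σ : X → M) (u : List X) :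
    ∀ p q : M, mpath σ p (posw u) q ↔ p * (u.map σ).prod = q := by
  induction u with
  | nil => intro p q; simp [mpath, posw]
  | cons x u ih =>
    intro p q
    simp only [posw, List.map_cons, mpath, mstep, List.prod_cons]
    constructor
    · rintro ⟨r, rfl, h⟩
      rw [← mul_assoc]; exact (ih _ _).1 h
    · intro h
      exact ⟨p * σ x, rfl, (ih _ _).2 (by rw [mul_assoc]; exact h)⟩

lemma mpath_negw {M X : Type*} [Monoid M] (σ : X → M) (v : List X) :
    ∀ p q : M, mpath σ p (negw v) q ↔ q * (v.map σ).prod = p := by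
  induction v with
  | nil => intro p q; simp [mpath, negw]; exact comm
  | cons x v ih =>
    intro p q
    have : negw (x :: v) = negw v ++ [Sum.inr x] := by
      simp [negw]
    rw [this, mpath_append]
    simp only [mpath, mstep, List.map_cons, List.prod_cons]
    constructor
    · rintro ⟨r, h1, s, h2, rfl⟩
      rw [← (ih _ _).1 h1, ← h2, mul_assoc]
    · intro h
      exact ⟨q * σ x, (ih _ _).2 (by rw [mul_assoc]; exact h), q, rfl, rfl⟩

lemma zigzag_key {M X : Type*} [Monoid M] (σ : X → M) :
    ∀ (n : ℕ) (u v : Fin n → List X) (a : M),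
    mpath σ a ((List.ofFn fun k => posw (u k) ++ negw (v k)).flatten) 1 ↔
      ∃ p : Fin (n + 1) → M, p 0 = a ∧ p (Fin.last n) = 1 ∧
        ∀ k : Fin n,
          p k.castSucc * ((u k).map σ).prod = p k.succ * ((v k).map σ).prod := by
  intro n
  induction n with
  | zero =>
    intro u v a
    simp only [List.ofFn_zero, List.flatten_nil, mpath]
    constructor
    · rintro rfl
      exact ⟨fun _ => 1, rfl, rfl, fun k => k.elim0⟩
    · rintro ⟨p, h0, h1, _⟩
      rw [← h0, ← h1]; rfl
  | succ n ih =>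
    intro u v a
    rw [List.ofFn_succ, List.flatten_cons, mpath_append]
    constructor
    · rintro ⟨r, h1, h2⟩
      rw [mpath_append] at h1
      obtain ⟨s, hs1, hs2⟩ := h1
      rw [mpath_posw] at hs1
      rw [mpath_negw] at hs2
      obtain ⟨q, hq0, hqlast, hq⟩ := (ih (fun k => u k.succ) (fun k => v k.succ) r).1 h2
      refine ⟨Fin.cons a q, Fin.cons_zero _ _, ?_, ?_⟩
      · rw [← Fin.succ_last, Fin.cons_succ]; exact hqlast
      · intro k
        refine Fin.cases ?_ ?_ k
        · show (Fin.cons a q : Fin (n+2) → M) ((0:Fin (n+1)).castSucc) * _ =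
            (Fin.cons a q : Fin (n+2) → M) ((0:Fin (n+1)).succ) * _
          rw [Fin.castSucc_zero, Fin.cons_zero, Fin.cons_succ, hq0]
          exact hs1.trans hs2.symm
        · intro j
          show (Fin.cons a q : Fin (n+2) → M) (j.succ.castSucc) * _ =
            (Fin.cons a q : Fin (n+2) → M) (j.succ.succ) * _
          rw [← Fin.succ_castSucc, Fin.cons_succ, Fin.cons_succ]
          exact hq j
    · rintro ⟨p, h0, hlast, hp⟩
      refine ⟨p 1, ?_, ?_⟩
      · rw [mpath_append]
        refine ⟨a * ((u 0).map σ).prod, (mpath_posw σ _ _ _).2 rfl,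
          (mpath_negw σ _ _ _).2 ?_⟩
        have := hp 0
        rw [Fin.castSucc_zero, h0] at this
        exact this.symm
      · refine (ih (fun k => u k.succ) (fun k => v k.succ) (p 1)).2
          ⟨fun i => p i.succ, ?_, ?_, ?_⟩
        · rfl
        · show p (Fin.last n).succ = 1
          rw [Fin.succ_last]; exact hlast
        · intro k
          have := hp k.succ
          rwa [← Fin.succ_castSucc] at this

/-- Zig Zag Lemma: a word `w = u₀ v̄₁ u₁ v̄₂ ⋯ u_{n-1} v̄ₙ` (with `uᵢ, vᵢ ∈ X*`)
lies in the loop problem `L_σ(M)` if and only if there exist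
`p₀, …, pₙ ∈ M` with `p₀ = pₙ = 1` and `pᵢ·σ(uᵢ) = p_{i+1}·σ(v_{i+1})` for all
`0 ≤ i < n`. -/
theorem zigzag_lemma {M X : Type*} [Monoid M] (σ : X → M)
    (hσ : ∀ m : M, ∃ u : List X, (u.map σ).prod = m)
    (n : ℕ) (u v : Fin n → List X) :
    mpath σ 1 ((List.ofFn fun k => posw (u k) ++ negw (v k)).flatten) 1 ↔
      ∃ p : Fin (n + 1) → M, p 0 = 1 ∧ p (Fin.last n) = 1 ∧
        ∀ k : Fin n,
          p k.castSucc * ((u k).map σ).prod = p k.succ * ((v k).map σ).prod := by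
  exact zigzag_key σ n u v 1
end

section
/- Let T be a weakly pseudo-right-unitary subsemigroup of a semigroup S, with choices of generators σ : X⁺ → T and τ : Y⁺ → S such that X ⊆ Y and σ is the restriction of τ. Then L_σ(T) = L_τ(S) ∩ (X ∪ X̄)*. -/
/-- Right action of a semigroup element on the carrier of `A¹` (the semigroup
`A` with identity `none` adjoined), where the semigroup multiplication on `A`
is given by `f`. -/
def act {A : Type*} (f : A → A → A) : Option A → A → Option A
  | none, s => some s
  | some t, s => some (f t s)

/-- One edge of the loop automaton of the semigroup with carrier `A`,
multiplication `f` and generators `σ : X → A`: vertices are elements of `A¹`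
(with `none` the adjoined identity `1`), with a positive edge `p →ˣ p·σ(x)`
and its reverse labelled `x̄`. -/
def sstep {A X : Type*} (f : A → A → A) (σ : X → A) (p : Option A) :
    X ⊕ X → Option A → Prop
  | Sum.inl x, q => act f p (σ x) = q
  | Sum.inr x, q => act f q (σ x) = p

/-- `spathIn f σ V p w q` holds iff `w` labels a path from `p` to `q` in the
loop automaton of the semigroup `(A, f)` with generators `σ`, all of whose
intermediate vertices lie in the vertex set `V`. -/
def spathIn {A X : Type*} (f : A → A → A) (σ : X → A) (V : Set (Option A)) :
    Option A → List (X ⊕ X) → Option A → Prop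
  | p, [], q => p = q
  | p, a :: w, q => ∃ r ∈ V, sstep f σ p a r ∧ spathIn f σ V r w q

/-! A backward edge `p →x̄ r` only constrains the product `r·x`, so a loop of the automaton of `S`
may leave `T¹`; it can however be rerouted. Walking the word from its end, one shows: if the rest
of the word leads from a vertex `c·m` (`m ∈ T¹`) back to `1`, it also does so inside `T¹` from
some `b·m` with `b ∈ T` and `b·t = c·t`, for any prescribed `t ∈ T`. Taking `t = x` at a backward
edge `p →x̄ c` reroutes that edge to `p →x̄ b`; at a backward edge leaving `c·m`, this vertex lies
in `T`, and weak pseudo-right-unitarity applied to `c`, `m`, `t` supplies `b`. -/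

open Set

lemma spathIn_mono {A X : Type*} {f : A → A → A} {σ : X → A} {V W : Set (Option A)}
    (hVW : V ⊆ W) {p q : Option A} {w : List (X ⊕ X)} (h : spathIn f σ V p w q) :
    spathIn f σ W p w q := by
  induction w generalizing p with
  | nil => exact h
  | cons a w ih =>
    obtain ⟨r, hr, hstep, hpath⟩ := h
    exact ⟨r, hVW hr, hstep, ih hpath⟩

section Mul

variable {S : Type*}

/-- The vertex set `T¹` of the loop automaton of `T`. -/
def adjoinOne (T : Set S) : Set (Option S) := {none} ∪ {p | ∃ t ∈ T, p = some t}

@[simp]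
lemma none_mem_adjoinOne (T : Set S) : (none : Option S) ∈ adjoinOne T := Or.inl rfl

@[simp]
lemma some_mem_adjoinOne {T : Set S} {t : S} : some t ∈ adjoinOne T ↔ t ∈ T := by
  simp [adjoinOne]

variable [Mul S]

def IsWeaklyPseudoRightUnitary (T : Set S) : Prop :=
  ∀ (a : S), ∀ x ∈ T, ∀ y ∈ T, a * x ∈ T → ∃ b ∈ T, a * x = b * x ∧ a * y = b * y

/-- `mulOpt c m = c·m` for `m ∈ S¹`, with `none` the identity. -/
def mulOpt (c : S) : Option S → S
  | none => c
  | some m => c * m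

lemma IsWeaklyPseudoRightUnitary.exists_mulOpt_eq {T : Set S} (hT : IsWeaklyPseudoRightUnitary T)
    {c t : S} {m : Option S} (hm : m ∈ adjoinOne T) (hcm : mulOpt c m ∈ T) (ht : t ∈ T) :
    ∃ b ∈ T, mulOpt b m = mulOpt c m ∧ b * t = c * t := by
  cases m with
  | none => exact ⟨c, hcm, rfl, rfl⟩
  | some m =>
    obtain ⟨b, hb, hbm, hbt⟩ := hT c m (some_mem_adjoinOne.1 hm) t ht hcm
    exact ⟨b, hb, hbm.symm, hbt.symm⟩

end Mul

section Semigroup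

variable {S Y : Type*} [Semigroup S] {T : Set S} {τ : Y → S}

lemma mulOpt_act (c : S) (m : Option S) (s : S) :
    mulOpt c (act (· * ·) m s) = mulOpt c m * s := by
  cases m <;> simp [act, mulOpt, mul_assoc]

lemma act_mem_adjoinOne (hT : ∀ a ∈ T, ∀ b ∈ T, a * b ∈ T) {p : Option S} {s : S}
    (hp : p ∈ adjoinOne T) (hs : s ∈ T) : act (· * ·) p s ∈ adjoinOne T := by
  cases p with
  | none => simpa [act] using hs
  | some t => simpa [act] using hT t (some_mem_adjoinOne.1 hp) s hs

lemma mulOpt_mem (hT : ∀ a ∈ T, ∀ b ∈ T, a * b ∈ T) {b : S} {m : Option S} (hb : b ∈ T)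
    (hm : m ∈ adjoinOne T) : mulOpt b m ∈ T := by
  cases m with
  | none => exact hb
  | some m => exact hT b hb m (some_mem_adjoinOne.1 hm)

variable (T τ)

def PathsStayIn (w : List (Y ⊕ Y)) : Prop :=
  ∀ p ∈ adjoinOne T, spathIn (· * ·) τ univ p w none → spathIn (· * ·) τ (adjoinOne T) p w none

def PathsLift (w : List (Y ⊕ Y)) : Prop :=
  ∀ (c : S) (m : Option S), m ∈ adjoinOne T → ∀ t ∈ T,
    spathIn (· * ·) τ univ (some (mulOpt c m)) w none →
      ∃ b ∈ T, b * t = c * t ∧ spathIn (· * ·) τ (adjoinOne T) (some (mulOpt b m)) w none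

variable {T τ}

lemma PathsStayIn.cons_inl (hT : ∀ a ∈ T, ∀ b ∈ T, a * b ∈ T) {x : Y} (hx : τ x ∈ T)
    {w : List (Y ⊕ Y)} (h : PathsStayIn T τ w) : PathsStayIn T τ (.inl x :: w) := by
  rintro p hp ⟨r, -, hstep : act (· * ·) p (τ x) = r, hpath⟩
  subst hstep
  have hr := act_mem_adjoinOne hT hp hx
  exact ⟨_, hr, rfl, h _ hr hpath⟩

lemma PathsLift.cons_inl (hT : ∀ a ∈ T, ∀ b ∈ T, a * b ∈ T) {x : Y} (hx : τ x ∈ T)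
    {w : List (Y ⊕ Y)} (h : PathsLift T τ w) : PathsLift T τ (.inl x :: w) := by
  rintro c m hm t ht ⟨r, -, hstep : some (mulOpt c m * τ x) = r, hpath⟩
  subst hstep
  have hm' := act_mem_adjoinOne hT hm hx
  rw [← mulOpt_act] at hpath
  obtain ⟨b, hb, hbt, hbpath⟩ := h c _ hm' t ht hpath
  refine ⟨b, hb, hbt, some (mulOpt b (act (· * ·) m (τ x))), ?_, ?_, hbpath⟩
  · exact some_mem_adjoinOne.2 (mulOpt_mem hT hb hm')
  · exact congrArg some (mulOpt_act b m (τ x)).symm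

lemma spathIn_adjoinOne_cons_inr {x : Y} (hx : τ x ∈ T) {w : List (Y ⊕ Y)}
    (hstay : PathsStayIn T τ w) (hlift : PathsLift T τ w) {p : Option S}
    (h : spathIn (· * ·) τ univ p (.inr x :: w) none) :
    spathIn (· * ·) τ (adjoinOne T) p (.inr x :: w) none := by
  obtain ⟨r, -, hstep : act (· * ·) r (τ x) = p, hpath⟩ := h
  subst hstep
  cases r with
  | none => exact ⟨none, none_mem_adjoinOne T, rfl, hstay none (none_mem_adjoinOne T) hpath⟩
  | some d =>
    obtain ⟨b, hb, hbx, hbpath⟩ := hlift d none (none_mem_adjoinOne T) (τ x) hx hpath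
    exact ⟨some b, some_mem_adjoinOne.2 hb, congrArg some hbx, hbpath⟩

lemma PathsLift.cons_inr (hT : ∀ a ∈ T, ∀ b ∈ T, a * b ∈ T) (hwpru : IsWeaklyPseudoRightUnitary T)
    {x : Y} (hx : τ x ∈ T) {w : List (Y ⊕ Y)} (hstay : PathsStayIn T τ w)
    (hlift : PathsLift T τ w) : PathsLift T τ (.inr x :: w) := by
  intro c m hm t ht h
  have hpath := spathIn_adjoinOne_cons_inr hx hstay hlift h
  have hcm : mulOpt c m ∈ T := by
    obtain ⟨r, hr, hstep : act (· * ·) r (τ x) = some (mulOpt c m), -⟩ := hpath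
    exact some_mem_adjoinOne.1 (hstep ▸ act_mem_adjoinOne hT hr hx)
  obtain ⟨b, hb, hbm, hbt⟩ := hwpru.exists_mulOpt_eq hm hcm ht
  exact ⟨b, hb, hbt, hbm ▸ hpath⟩

lemma pathsStayIn_and_pathsLift (hT : ∀ a ∈ T, ∀ b ∈ T, a * b ∈ T)
    (hwpru : IsWeaklyPseudoRightUnitary T) {X : Set Y} (hX : ∀ y ∈ X, τ y ∈ T)
    {w : List (Y ⊕ Y)} (hw : ∀ a ∈ w, Sum.elim (· ∈ X) (· ∈ X) a) :
    PathsStayIn T τ w ∧ PathsLift T τ w := by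
  induction w with
  | nil =>
    refine ⟨fun _ _ h => h, ?_⟩
    rintro c m - t - ⟨⟩
  | cons a w ih =>
    rw [List.forall_mem_cons] at hw
    obtain ⟨hstay, hlift⟩ := ih hw.2
    cases a with
    | inl x => exact ⟨hstay.cons_inl hT (hX x hw.1), hlift.cons_inl hT (hX x hw.1)⟩
    | inr x =>
      exact ⟨fun _ _ => spathIn_adjoinOne_cons_inr (hX x hw.1) hstay hlift,
        hlift.cons_inr hT hwpru (hX x hw.1) hstay⟩

end Semigroup

theorem loopProblem_weakly_pru_subsemigroup_general {S Y : Type*} [Semigroup S]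
    (T : Set S) (X : Set Y) (τ : Y → S)
    (hsub : ∀ a ∈ T, ∀ b ∈ T, a * b ∈ T)
    (hwpru : ∀ (a : S), ∀ x ∈ T, ∀ y ∈ T, a * x ∈ T →
      ∃ b ∈ T, a * x = b * x ∧ a * y = b * y)
    (hXT : ∀ y ∈ X, τ y ∈ T) :
    {w : List (Y ⊕ Y) |
        spathIn (· * ·) τ ({none} ∪ {p | ∃ t ∈ T, p = some t}) none w none ∧
        ∀ a ∈ w, Sum.elim (· ∈ X) (· ∈ X) a} =
      {w : List (Y ⊕ Y) | spathIn (· * ·) τ Set.univ none w none} ∩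
        {w | ∀ a ∈ w, Sum.elim (· ∈ X) (· ∈ X) a} := by
  ext w
  refine ⟨fun ⟨hloop, hw⟩ => ⟨spathIn_mono (subset_univ _) hloop, hw⟩, fun ⟨hloop, hw⟩ => ⟨?_, hw⟩⟩
  exact (pathsStayIn_and_pathsLift hsub hwpru hXT hw).1 none (none_mem_adjoinOne T) hloop

/-- Let `T` be a weakly pseudo-right-unitary subsemigroup of a semigroup `S`,
with generators `τ : Y⁺ → S` restricting on `X ⊆ Y` to generators
`σ = τ|_X : X⁺ → T` of `T`. Then `L_σ(T) = L_τ(S) ∩ (X ∪ X̄)*`: the loop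
problem of `T` (loops at `1` in the loop automaton of `T`, i.e. paths whose
vertices lie in `T ∪ {1}`, labelled over `X ∪ X̄`) equals the set of words of
`L_τ(S)` over the subalphabet `X ∪ X̄`. -/
theorem loopProblem_weakly_pru_subsemigroup {S Y : Type*} [Semigroup S]
    (T : Set S) (X : Set Y) (τ : Y → S)
    (hsub : ∀ a ∈ T, ∀ b ∈ T, a * b ∈ T)
    (hwpru : ∀ (a : S), ∀ x ∈ T, ∀ y ∈ T, a * x ∈ T →
      ∃ b ∈ T, a * x = b * x ∧ a * y = b * y)
    (hXT : ∀ y ∈ X, τ y ∈ T)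
    (hgenT : ∀ t ∈ T, ∃ u : List Y, (∀ y ∈ u, y ∈ X) ∧
      ((u.map τ).foldl (act (· * ·)) none = some t))
    (hgenS : ∀ s : S, ∃ u : List Y,
      (u.map τ).foldl (act (· * ·)) none = some s) :
    {w : List (Y ⊕ Y) |
        spathIn (· * ·) τ ({none} ∪ {p | ∃ t ∈ T, p = some t}) none w none ∧
        ∀ a ∈ w, Sum.elim (· ∈ X) (· ∈ X) a} =
      {w : List (Y ⊕ Y) | spathIn (· * ·) τ Set.univ none w none} ∩
        {w | ∀ a ∈ w, Sum.elim (· ∈ X) (· ∈ X) a} :=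
  loopProblem_weakly_pru_subsemigroup_general T X τ hsub hwpru hXT
end

section
/- Let S be a semigroup with generators σ : X⁺ → S, and let τ : (X ∪ {z})⁺ → S⁰ extend σ with τ(z) = 0. Then L_σ(S) = L_τ(S⁰) ∩ (X ∪ X̄)*. -/
/-- Multiplication of `S⁰ = S ∪ {0}`, modelled as `Option S` with `none` the
(absorbing) zero. -/
def szMul {S : Type*} [Semigroup S] (a b : Option S) : Option S :=
  a.bind fun x => b.map fun y => x * y

/-- Embedding of words over the doubled alphabet `X ∪ X̄` into words over the
doubled alphabet `(X ∪ {z}) ∪ (X̄ ∪ {z̄})`. -/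
def wembed {X : Type*} (w : List (X ⊕ X)) : List ((X ⊕ Unit) ⊕ (X ⊕ Unit)) :=
  w.map (Sum.map Sum.inl Sum.inl)

section Aux
variable {S X : Type*} [Semigroup S] (σ : X → S)

local notation "τ" => (Sum.elim (fun x => (some (σ x) : Option S)) fun _ => (none : Option S))

lemma emb_act (p : Option S) (x : X) :
    act szMul (Option.map some p) (some (σ x)) =
      Option.map some (act (· * ·) p (σ x)) := by
  cases p <;> rfl

lemma path_embed (p q : Option S) (w : List (X ⊕ X))
    (h : spathIn (· * ·) σ Set.univ p w q) :
    spathIn szMul τ Set.univ (Option.map some p) (wembed w) (Option.map some q) := by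
  induction w generalizing p with
  | nil => cases h; exact rfl
  | cons a w ih =>
    obtain ⟨r, -, hs, hp⟩ := h
    cases a with
    | inl x =>
      refine ⟨Option.map some r, trivial, ?_, ih r hp⟩
      show act szMul (Option.map some p) (some (σ x)) = Option.map some r
      rw [emb_act, hs]
    | inr x =>
      refine ⟨Option.map some r, trivial, ?_, ih r hp⟩
      show act szMul (Option.map some r) (some (σ x)) = Option.map some p
      rw [emb_act σ r, hs]

lemma path_unembed (p : Option S) (q' : Option (Option S)) (w : List (X ⊕ X))
    (h : spathIn szMul τ Set.univ (Option.map some p) (wembed w) q') :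
    ∃ q : Option S, q' = Option.map some q ∧ spathIn (· * ·) σ Set.univ p w q := by
  induction w generalizing p with
  | nil => exact ⟨p, h.symm, rfl⟩
  | cons a w ih =>
    obtain ⟨r, -, hs, hp⟩ := h
    cases a with
    | inl x =>
      have hr : r = Option.map some (act (· * ·) p (σ x)) := by
        rw [← emb_act]; exact hs.symm
      subst hr
      obtain ⟨q, hq, hpath⟩ := ih _ hp
      exact ⟨q, hq, act (· * ·) p (σ x), trivial, rfl, hpath⟩
    | inr x =>
      have hs' : act szMul r (some (σ x)) = Option.map some p := hs
      have : ∃ r' : Option S, r = Option.map some r' ∧ act (· * ·) r' (σ x) = p := by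
        match r, hs' with
        | none, hs' =>
          cases p with
          | none => simp [act, szMul] at hs'
          | some t =>
            refine ⟨none, rfl, ?_⟩
            have : σ x = t := by
              simpa [act, szMul, Option.map] using hs'
            simp [act, this]
        | some none, hs' =>
          cases p <;> simp [act, szMul, Option.map] at hs'
        | some (some u), hs' =>
          cases p with
          | none => simp [act, szMul, Option.map] at hs'
          | some t =>
            have : u * σ x = t := by simpa [act, szMul, Option.map] using hs'
            exact ⟨some u, rfl, by simp [act, this]⟩
      obtain ⟨r', hr, hact⟩ := this
      subst hr
      obtain ⟨q, hq, hpath⟩ := ih _ hp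
      exact ⟨q, hq, r', trivial, hact, hpath⟩

lemma left_letters_embed (w' : List ((X ⊕ Unit) ⊕ (X ⊕ Unit)))
    (h : ∀ a ∈ w', Sum.elim Sum.isLeft Sum.isLeft a = true) :
    ∃ w : List (X ⊕ X), w' = wembed w := by
  induction w' with
  | nil => exact ⟨[], rfl⟩
  | cons a w' ih =>
    obtain ⟨w, hw⟩ := ih fun b hb => h b (.tail _ hb)
    have ha := h a (.head _)
    match a, ha with
    | Sum.inl (Sum.inl x), _ => exact ⟨Sum.inl x :: w, by simp [wembed, hw]⟩
    | Sum.inr (Sum.inl x), _ => exact ⟨Sum.inr x :: w, by simp [wembed, hw]⟩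

end Aux

/-- Let `S` be a semigroup with generators `σ : X⁺ → S` and let
`τ : (X ∪ {z})⁺ → S⁰` extend `σ` with `τ(z) = 0`.
Then `L_σ(S) = L_τ(S⁰) ∩ (X ∪ X̄)*`. -/
theorem loopProblem_remove_zero {S X : Type*} [Semigroup S] (σ : X → S)
    (hσ : ∀ s : S, ∃ u : List X,
      (u.map σ).foldl (act (· * ·)) none = some s) :
    {w' : List ((X ⊕ Unit) ⊕ (X ⊕ Unit)) |
        ∃ w : List (X ⊕ X),
          spathIn (· * ·) σ Set.univ none w none ∧ w' = wembed w} =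
      {w' : List ((X ⊕ Unit) ⊕ (X ⊕ Unit)) |
          spathIn szMul
            (Sum.elim (fun x => (some (σ x) : Option S)) fun _ => none)
            Set.univ none w' none} ∩
        {w' | ∀ a ∈ w', Sum.elim Sum.isLeft Sum.isLeft a = true} := by
  ext w'
  constructor
  · rintro ⟨w, hpath, rfl⟩
    refine ⟨path_embed σ none none w hpath, ?_⟩
    intro a ha
    obtain ⟨b, -, rfl⟩ := List.mem_map.mp ha
    cases b <;> rfl
  · rintro ⟨hpath, hleft⟩
    obtain ⟨w, rfl⟩ := left_letters_embed w' hleft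
    obtain ⟨q, hq, hpath'⟩ := path_unembed σ none none w hpath
    cases q with
    | none => exact ⟨w, hpath', rfl⟩
    | some t => simp at hq
end
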